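/- Let F be a nonnegative function on G(n,k). Then the following are equivalent: (i) F is polyconvex, i.e., there exists a gauge h : EuclideanSpace ℝ (Λ(n,k)) → ℝ with h(ξ) = F(ξ) for every ξ ∈ G(n,k); (ii) Conv_F(ξ) = F(ξ) for every ξ ∈ G(n,k). -/

import Mathlib

open scoped BigOperators Matrix

/-- `Lam n k` : the `k`-element subsets of `Fin n` (the index set `Λ(n,k)`). -/
abbrev Lam (n k : ℕ) : Type := {s : Finset (Fin n) // s.card = k}

/-- The Plücker (minor) vector of a matrix `A : Matrix (Fin n) (Fin k) ℝ`:
`M(A)(λ)` is the determinant of the `k × k` submatrix of `A` formed by the rows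
indexed by `λ`. -/
noncomputable def pluecker (n k : ℕ) (A : Matrix (Fin n) (Fin k) ℝ) :
    EuclideanSpace ℝ (Lam n k) :=
  WithLp.toLp 2 (fun (lam : Lam n k) => (A.submatrix (lam.1.orderEmbOfFin lam.2) id).det)

/-- The Plücker model of the oriented Grassmannian `G(n,k)`. -/
def Grass (n k : ℕ) : Set (EuclideanSpace ℝ (Lam n k)) :=
  {x | ∃ A : Matrix (Fin n) (Fin k) ℝ, Aᵀ * A = 1 ∧ pluecker n k A = x}

/-- The set of costs of representations of a point as a finite positive
combination of points of the Grassmannian. -/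
def reprSet (n k : ℕ) (F : EuclideanSpace ℝ (Lam n k) → ℝ)
    (x : EuclideanSpace ℝ (Lam n k)) : Set ℝ :=
  {t | ∃ (N : ℕ) (m : Fin N → ℝ) (η : Fin N → EuclideanSpace ℝ (Lam n k)),
    1 ≤ N ∧ (∀ i, 0 < m i) ∧ (∀ i, η i ∈ Grass n k) ∧
    x = ∑ i, m i • η i ∧ t = ∑ i, m i * F (η i)}

/-- The convex positively homogeneous hull of an integrand. -/
noncomputable def ConvF (n k : ℕ) (F : EuclideanSpace ℝ (Lam n k) → ℝ)
    (x : EuclideanSpace ℝ (Lam n k)) : ℝ :=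
  sInf (reprSet n k F x)

/-- A gauge: a nonnegative, convex, positively homogeneous real function. -/
def IsGauge (n k : ℕ) (h : EuclideanSpace ℝ (Lam n k) → ℝ) : Prop :=
  (∀ x, 0 ≤ h x) ∧ ConvexOn ℝ Set.univ h ∧
    ∀ (t : ℝ) (x : EuclideanSpace ℝ (Lam n k)), 0 ≤ t → h (t • x) = t * h x

/-!
A gauge `h` is sublinear, so `h (∑ mᵢ • ηᵢ) ≤ ∑ mᵢ * h ηᵢ`; if `h = F` on `G(n,k)` this says that
`F ξ` is a lower bound for every representation cost of `ξ`, while the trivial representation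
`ξ = 1 • ξ` shows `Conv_F ξ ≤ F ξ`. Conversely `Conv_F` is itself a gauge: it is finite because
the `±e_λ` lie on `G(n,k)` and positively span the whole space, positively homogeneous because
representations can be rescaled, and subadditive because representations can be concatenated.
-/

open scoped Pointwise

section Gauge

variable {E : Type*} [AddCommGroup E] [Module ℝ E] {h : E → ℝ}

lemma map_add_le_of_convexOn_of_homogeneous (hconv : ConvexOn ℝ Set.univ h)
    (hhom : ∀ (t : ℝ) (x : E), 0 ≤ t → h (t • x) = t * h x) (x y : E) :
    h (x + y) ≤ h x + h y := by
  have hmid := hconv.2 (Set.mem_univ x) (Set.mem_univ y) (by norm_num : (0 : ℝ) ≤ 1 / 2)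
    (by norm_num : (0 : ℝ) ≤ 1 / 2) (by norm_num)
  calc h (x + y) = 2 * h ((1 / 2 : ℝ) • x + (1 / 2 : ℝ) • y) := by
        rw [← hhom 2 _ zero_le_two, smul_add, smul_smul, smul_smul]; norm_num
    _ ≤ 2 * ((1 / 2 : ℝ) • h x + (1 / 2 : ℝ) • h y) := mul_le_mul_of_nonneg_left hmid zero_le_two
    _ = h x + h y := by simp only [smul_eq_mul]; ring

lemma map_sum_smul_le_of_convexOn_of_homogeneous (hconv : ConvexOn ℝ Set.univ h)
    (hhom : ∀ (t : ℝ) (x : E), 0 ≤ t → h (t • x) = t * h x) {ι : Type*} (s : Finset ι)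
    {m : ι → ℝ} (hm : ∀ i ∈ s, 0 ≤ m i) (x : ι → E) :
    h (∑ i ∈ s, m i • x i) ≤ ∑ i ∈ s, m i * h (x i) :=
  calc h (∑ i ∈ s, m i • x i) ≤ ∑ i ∈ s, h (m i • x i) :=
        Finset.le_sum_of_subadditive h (le_of_eq (by simpa using hhom 0 0 le_rfl))
          (map_add_le_of_convexOn_of_homogeneous hconv hhom) s _
    _ = ∑ i ∈ s, m i * h (x i) := Finset.sum_congr rfl fun i hi => hhom _ _ (hm i hi)

lemma convexOn_univ_of_subadditive_of_homogeneous (hadd : ∀ x y, h (x + y) ≤ h x + h y)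
    (hhom : ∀ (t : ℝ) (x : E), 0 ≤ t → h (t • x) = t * h x) : ConvexOn ℝ Set.univ h :=
  ⟨convex_univ, fun x _ y _ a b ha hb _ => by
    simpa only [hhom a x ha, hhom b y hb, smul_eq_mul] using hadd (a • x) (b • y)⟩

end Gauge

section Grassmannian

variable {n k : ℕ}

lemma nonempty_lam (hkn : k ≤ n) : Nonempty (Lam n k) := by
  obtain ⟨s, hs⟩ := Finset.powersetCard_nonempty.2 (by simpa using hkn :
    k ≤ (Finset.univ : Finset (Fin n)).card)
  exact ⟨⟨s, (Finset.mem_powersetCard.1 hs).2⟩⟩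

lemma pluecker_mul (A : Matrix (Fin n) (Fin k) ℝ) (Q : Matrix (Fin k) (Fin k) ℝ) :
    pluecker n k (A * Q) = Q.det • pluecker n k A := by
  ext lam
  simp [pluecker, Matrix.submatrix_mul _ _ _ id _ Function.bijective_id, Matrix.det_mul,
    mul_comm]

lemma det_smul_mem_grass {ξ : EuclideanSpace ℝ (Lam n k)} (hξ : ξ ∈ Grass n k)
    {Q : Matrix (Fin k) (Fin k) ℝ} (hQ : Qᵀ * Q = 1) : Q.det • ξ ∈ Grass n k := by
  obtain ⟨A, hA, rfl⟩ := hξ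
  refine ⟨A * Q, ?_, pluecker_mul A Q⟩
  rw [Matrix.transpose_mul, Matrix.mul_assoc, ← Matrix.mul_assoc Aᵀ, hA, Matrix.one_mul, hQ]

lemma neg_mem_grass (hk : 1 ≤ k) {ξ : EuclideanSpace ℝ (Lam n k)} (hξ : ξ ∈ Grass n k) :
    -ξ ∈ Grass n k := by
  let i : Fin k := ⟨0, hk⟩
  let D : Matrix (Fin k) (Fin k) ℝ := Matrix.diagonal (Function.update 1 i (-1))
  have hD : Dᵀ * D = 1 := by
    rw [Matrix.diagonal_transpose, Matrix.diagonal_mul_diagonal, ← Matrix.diagonal_one]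
    congr 1
    ext j
    rcases eq_or_ne j i with rfl | hj <;> simp [*]
  have hdet : D.det = -1 := by
    rw [Matrix.det_diagonal, Finset.prod_update_of_mem (Finset.mem_univ i)]
    simp
  simpa [hdet] using det_smul_mem_grass hξ hD

lemma single_mem_grass (lam : Lam n k) : EuclideanSpace.single lam (1 : ℝ) ∈ Grass n k := by
  set r := lam.1.orderEmbOfFin lam.2
  refine ⟨(1 : Matrix (Fin n) (Fin n) ℝ).submatrix id r, ?_, ?_⟩
  · rw [Matrix.transpose_submatrix, Matrix.transpose_one,
      ← Matrix.submatrix_mul _ _ _ _ _ Function.bijective_id, Matrix.mul_one,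
      Matrix.submatrix_one _ r.injective]
  ext mu
  simp only [pluecker, Matrix.submatrix_submatrix, Function.comp_id, Function.id_comp]
  rcases eq_or_ne mu lam with rfl | hne
  · simp [r, Matrix.submatrix_one _ (Finset.orderEmbOfFin _ _).injective]
  rw [PiLp.single_apply, if_neg hne]
  obtain ⟨a, ha, hna⟩ : ∃ a ∈ mu.1, a ∉ lam.1 := Finset.not_subset.1 fun hsub =>
    hne (Subtype.ext (Finset.eq_of_subset_of_card_le hsub (by rw [mu.2, lam.2])))
  obtain ⟨i, rfl⟩ : a ∈ Set.range (mu.1.orderEmbOfFin mu.2) := by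
    rw [Finset.range_orderEmbOfFin]; exact ha
  refine Matrix.det_eq_zero_of_row_eq_zero i fun j => Matrix.one_apply_ne fun h => hna ?_
  exact h ▸ Finset.orderEmbOfFin_mem lam.1 lam.2 j

end Grassmannian

section Hull

variable {n k : ℕ} {F : EuclideanSpace ℝ (Lam n k) → ℝ}

lemma self_mem_reprSet {ξ : EuclideanSpace ℝ (Lam n k)} (hξ : ξ ∈ Grass n k) :
    F ξ ∈ reprSet n k F ξ :=
  ⟨1, fun _ => 1, fun _ => ξ, le_rfl, fun _ => one_pos, fun _ => hξ, by simp, by simp⟩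

lemma reprSet_add_reprSet_subset (x y : EuclideanSpace ℝ (Lam n k)) :
    reprSet n k F x + reprSet n k F y ⊆ reprSet n k F (x + y) := by
  rintro _ ⟨_, ⟨N₁, m₁, η₁, hN₁, hm₁, hη₁, rfl, rfl⟩, _, ⟨N₂, m₂, η₂, -, hm₂, hη₂, rfl, rfl⟩, rfl⟩
  refine ⟨N₁ + N₂, Fin.addCases m₁ m₂, Fin.addCases η₁ η₂, by omega,
    Fin.addCases (by simpa using hm₁) (by simpa using hm₂),
    Fin.addCases (by simpa using hη₁) (by simpa using hη₂), ?_, ?_⟩ <;>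
  simp [Fin.sum_univ_add]

lemma mul_mem_reprSet_smul {t s : ℝ} (ht : 0 < t) {x : EuclideanSpace ℝ (Lam n k)}
    (hs : s ∈ reprSet n k F x) : t * s ∈ reprSet n k F (t • x) := by
  obtain ⟨N, m, η, hN, hm, hη, rfl, rfl⟩ := hs
  exact ⟨N, fun i => t * m i, η, hN, fun i => mul_pos ht (hm i), hη,
    by simp [Finset.smul_sum, smul_smul], by simp [Finset.mul_sum, mul_assoc]⟩

lemma reprSet_smul {t : ℝ} (ht : 0 < t) (x : EuclideanSpace ℝ (Lam n k)) :
    reprSet n k F (t • x) = t • reprSet n k F x := by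
  ext s
  refine ⟨fun hs => ⟨t⁻¹ * s, ?_, ?_⟩, fun ⟨s', hs', hs⟩ => hs ▸ mul_mem_reprSet_smul ht hs'⟩
  · simpa [smul_smul, ht.ne'] using mul_mem_reprSet_smul (inv_pos.2 ht) hs
  · simp [ht.ne']

lemma reprSet_nonneg (hF : ∀ ξ ∈ Grass n k, 0 ≤ F ξ) {x : EuclideanSpace ℝ (Lam n k)} :
    ∀ s ∈ reprSet n k F x, 0 ≤ s := by
  rintro _ ⟨N, m, η, -, hm, hη, -, rfl⟩
  exact Finset.sum_nonneg fun i _ => mul_nonneg (hm i).le (hF _ (hη i))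

lemma reprSet_bddBelow (hF : ∀ ξ ∈ Grass n k, 0 ≤ F ξ) (x : EuclideanSpace ℝ (Lam n k)) :
    BddBelow (reprSet n k F x) :=
  ⟨0, reprSet_nonneg hF⟩

lemma reprSet_nonempty (hk : 1 ≤ k) (hkn : k ≤ n) (x : EuclideanSpace ℝ (Lam n k)) :
    (reprSet n k F x).Nonempty := by
  let C := {x : EuclideanSpace ℝ (Lam n k) | (reprSet n k F x).Nonempty}
  have hadd : ∀ x y, x ∈ C → y ∈ C → x + y ∈ C := fun x y ⟨s, hs⟩ ⟨t, ht⟩ =>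
    ⟨s + t, reprSet_add_reprSet_subset x y (Set.add_mem_add hs ht)⟩
  have hsmul : ∀ {t : ℝ} {x}, 0 < t → x ∈ C → t • x ∈ C := fun ht ⟨s, hs⟩ =>
    ⟨_, mul_mem_reprSet_smul ht hs⟩
  have hline : ∀ (lam : Lam n k) (a : ℝ), a • EuclideanSpace.single lam (1 : ℝ) ∈ C := by
    intro lam a
    set e := EuclideanSpace.single lam (1 : ℝ)
    have he : e ∈ Grass n k := single_mem_grass lam
    have hsplit : a • e = (a + |a| + 1) • e + (|a| + 1) • -e := by
      rw [smul_neg, ← sub_eq_add_neg, ← sub_smul]; ring_nf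
    rw [hsplit]
    exact hadd _ _ (hsmul (by linarith [neg_abs_le a]) ⟨_, self_mem_reprSet he⟩)
      (hsmul (by positivity) ⟨_, self_mem_reprSet (neg_mem_grass hk he)⟩)
  obtain ⟨lam₀⟩ := nonempty_lam hkn
  rw [← (EuclideanSpace.basisFun (Lam n k) ℝ).sum_repr x]
  simp only [EuclideanSpace.basisFun_apply]
  exact Finset.sum_induction _ (· ∈ C) hadd (by simpa using hline lam₀ 0)
    fun lam _ => hline lam _

lemma convF_smul_of_pos {t : ℝ} (ht : 0 < t) (x : EuclideanSpace ℝ (Lam n k)) :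
    ConvF n k F (t • x) = t * ConvF n k F x := by
  rw [ConvF, reprSet_smul ht, Real.sInf_smul_of_nonneg ht.le]
  rfl

lemma convF_zero : ConvF n k F 0 = 0 := by
  have h2 := convF_smul_of_pos (F := F) two_pos 0
  rw [smul_zero] at h2
  linarith

lemma convF_smul {t : ℝ} (ht : 0 ≤ t) (x : EuclideanSpace ℝ (Lam n k)) :
    ConvF n k F (t • x) = t * ConvF n k F x := by
  rcases ht.eq_or_lt with rfl | ht
  · simp [convF_zero]
  · exact convF_smul_of_pos ht x

lemma convF_nonneg (hF : ∀ ξ ∈ Grass n k, 0 ≤ F ξ) (x : EuclideanSpace ℝ (Lam n k)) :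
    0 ≤ ConvF n k F x :=
  Real.sInf_nonneg (reprSet_nonneg hF)

lemma convF_add_le (hk : 1 ≤ k) (hkn : k ≤ n) (hF : ∀ ξ ∈ Grass n k, 0 ≤ F ξ)
    (x y : EuclideanSpace ℝ (Lam n k)) :
    ConvF n k F (x + y) ≤ ConvF n k F x + ConvF n k F y := by
  rw [ConvF, ConvF, ConvF, ← csInf_add (reprSet_nonempty hk hkn x) (reprSet_bddBelow hF x)
    (reprSet_nonempty hk hkn y) (reprSet_bddBelow hF y)]
  exact csInf_le_csInf (reprSet_bddBelow hF _)
    ((reprSet_nonempty hk hkn x).add (reprSet_nonempty hk hkn y))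
    (reprSet_add_reprSet_subset x y)

lemma convF_isGauge (hk : 1 ≤ k) (hkn : k ≤ n) (hF : ∀ ξ ∈ Grass n k, 0 ≤ F ξ) :
    IsGauge n k (ConvF n k F) :=
  ⟨convF_nonneg hF,
    convexOn_univ_of_subadditive_of_homogeneous (convF_add_le hk hkn hF)
      fun _ x ht => convF_smul ht x,
    fun _ x ht => convF_smul ht x⟩

lemma convF_le_of_mem_grass (hF : ∀ ξ ∈ Grass n k, 0 ≤ F ξ) {ξ : EuclideanSpace ℝ (Lam n k)}
    (hξ : ξ ∈ Grass n k) : ConvF n k F ξ ≤ F ξ :=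
  csInf_le (reprSet_bddBelow hF ξ) (self_mem_reprSet hξ)

lemma IsGauge.le_of_mem_reprSet {h : EuclideanSpace ℝ (Lam n k) → ℝ} (hh : IsGauge n k h)
    (hhF : ∀ ξ ∈ Grass n k, h ξ = F ξ) {x : EuclideanSpace ℝ (Lam n k)} {s : ℝ}
    (hs : s ∈ reprSet n k F x) : h x ≤ s := by
  obtain ⟨N, m, η, -, hm, hη, rfl, rfl⟩ := hs
  calc h (∑ i, m i • η i) ≤ ∑ i, m i * h (η i) :=
        map_sum_smul_le_of_convexOn_of_homogeneous hh.2.1 hh.2.2 _ (fun i _ => (hm i).le) η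
    _ = ∑ i, m i * F (η i) := Finset.sum_congr rfl fun i _ => by rw [hhF _ (hη i)]

end Hull

/-- a nonnegative integrand is polyconvex (extends to a gauge) iff it
coincides with its convex positively homogeneous hull on G(n,k). -/
theorem polyconvex_iff_convF_eq (n k : ℕ) (hk : 1 ≤ k) (hkn : k ≤ n)
    (F : EuclideanSpace ℝ (Lam n k) → ℝ)
    (hF : ∀ ξ ∈ Grass n k, 0 ≤ F ξ) :
    (∃ h : EuclideanSpace ℝ (Lam n k) → ℝ, IsGauge n k h ∧
      ∀ ξ ∈ Grass n k, h ξ = F ξ) ↔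
    (∀ ξ ∈ Grass n k, ConvF n k F ξ = F ξ) := by
  constructor
  · rintro ⟨h, hh, hhF⟩ ξ hξ
    refine le_antisymm (convF_le_of_mem_grass hF hξ) ?_
    rw [← hhF ξ hξ]
    exact le_csInf ⟨_, self_mem_reprSet hξ⟩ fun s hs => hh.le_of_mem_reprSet hhF hs
  · exact fun hcf => ⟨ConvF n k F, convF_isGauge hk hkn hF, hcf⟩
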